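/- arXiv:2605.03230 — 4 statements merged into one kernel-verified Lean document; each statement's English description precedes it below -/
import Mathlib

section
/- Under the SILMARILS signature equations with b ≠ 0, d ≠ 0, ε ≠ 0, the verification values satisfy V₀ = d·w₀·C and V₁ = d·w₁·C, where C = −a_K + r·a_ε·ε⁻¹. In particular (V₀, V₁) are the evaluations at w₀ and w₁ of the linear polynomial f(x) = d·C·x. -/
/-! The blinding factor `b` cancels in `σ₁σ₂ = d(K' − r)`, and `ε⁻¹ εᵢ = 1 + a_ε ε⁻¹ wᵢ`.
Substituting both, the constant terms `K'` and `r` of the Shamir polynomials cancel in `V₀` and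
`V₁`, leaving only their degree-one parts evaluated at `wᵢ`. -/

section

variable {F : Type*} [Field F]

theorem mul_mul_mul_inv_cancel {b : F} (hb : b ≠ 0) (x d : F) : b * x * (d * b⁻¹) = d * x := by
  field_simp

theorem inv_mul_add_mul_eq {ε : F} (hε : ε ≠ 0) (a w : F) :
    ε⁻¹ * (ε + a * w) = 1 + a * ε⁻¹ * w := by
  rw [mul_add, inv_mul_cancel₀ hε]
  ring

end

theorem silmarils_verification_values_general
    (p : ℕ) [Fact p.Prime] (w₀ w₁ : ZMod p)
    (K' r aK aε b d ε : ZMod p) (hb : b ≠ 0) (hε : ε ≠ 0)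
    -- Shamir shares
    (K₀' K₁' ε₀ ε₁ : ZMod p)
    (hK₀' : K₀' = K' + aK * w₀) (hK₁' : K₁' = K' + aK * w₁)
    (hε₀ : ε₀ = ε + aε * w₀) (hε₁ : ε₁ = ε + aε * w₁)
    -- signature components
    (σ₁ σ₂ σ₃ σ₄ σ₅ : ZMod p)
    (hσ₁ : σ₁ = b * (K' - r)) (hσ₂ : σ₂ = d * b⁻¹)
    (hσ₃ : σ₃ = K₁' * d) (hσ₄ : σ₄ = d * ε⁻¹ * ε₁)
    (hσ₅ : σ₅ = d * (K₀' - r * ε⁻¹ * ε₀))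
    -- verification values
    (V₀ V₁ C : ZMod p)
    (hV₀ : V₀ = σ₁ * σ₂ - σ₅) (hV₁ : V₁ = σ₁ * σ₂ - σ₃ + r * σ₄)
    (hC : C = -aK + r * aε * ε⁻¹) :
    V₀ = d * w₀ * C ∧ V₁ = d * w₁ * C := by
  subst hK₀' hK₁' hε₀ hε₁ hσ₁ hσ₂ hσ₃ hσ₄ hσ₅ hV₀ hV₁ hC
  have hσ₁σ₂ := mul_mul_mul_inv_cancel hb (K' - r) d
  have hε₀ := inv_mul_add_mul_eq hε aε w₀
  have hε₁ := inv_mul_add_mul_eq hε aε w₁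
  constructor
  · linear_combination hσ₁σ₂ + d * r * hε₀
  · linear_combination hσ₁σ₂ + d * r * hε₁

/-- **Structure of the verification values.**
Under the SILMARILS signature equations with `b ≠ 0`, `d ≠ 0`, `ε ≠ 0`, the
verification values satisfy `V₀ = d·w₀·C` and `V₁ = d·w₁·C`, where
`C = −a_K + r·a_ε·ε⁻¹`; i.e. `(V₀, V₁)` are the evaluations at `w₀` and `w₁`
of the linear polynomial `f(x) = d·C·x`. -/
theorem silmarils_verification_values
    (p : ℕ) [Fact p.Prime] (w₀ w₁ : ZMod p) (hw : w₀ ≠ w₁)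
    (K' r aK aε b d ε : ZMod p) (hb : b ≠ 0) (hd : d ≠ 0) (hε : ε ≠ 0)
    -- Shamir shares
    (K₀' K₁' ε₀ ε₁ : ZMod p)
    (hK₀' : K₀' = K' + aK * w₀) (hK₁' : K₁' = K' + aK * w₁)
    (hε₀ : ε₀ = ε + aε * w₀) (hε₁ : ε₁ = ε + aε * w₁)
    -- signature components
    (σ₁ σ₂ σ₃ σ₄ σ₅ : ZMod p)
    (hσ₁ : σ₁ = b * (K' - r)) (hσ₂ : σ₂ = d * b⁻¹)
    (hσ₃ : σ₃ = K₁' * d) (hσ₄ : σ₄ = d * ε⁻¹ * ε₁)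
    (hσ₅ : σ₅ = d * (K₀' - r * ε⁻¹ * ε₀))
    -- verification values
    (V₀ V₁ C : ZMod p)
    (hV₀ : V₀ = σ₁ * σ₂ - σ₅) (hV₁ : V₁ = σ₁ * σ₂ - σ₃ + r * σ₄)
    (hC : C = -aK + r * aε * ε⁻¹) :
    V₀ = d * w₀ * C ∧ V₁ = d * w₁ * C :=
  silmarils_verification_values_general p w₀ w₁ K' r aK aε b d ε hb hε K₀' K₁' ε₀ ε₁ hK₀' hK₁' hε₀
    hε₁ σ₁ σ₂ σ₃ σ₄ σ₅ hσ₁ hσ₂ hσ₃ hσ₄ hσ₅ V₀ V₁ C hV₀ hV₁ hC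
end

section
/- For every choice of parameters K', r, a_K, a_ε ∈ 𝔽_p and b, d, ε ∈ 𝔽_p with b ≠ 0, d ≠ 0, ε ≠ 0 (covering both honestly generated signatures and signatures simulated by the designated verifier with arbitrary K'*, a_K, a_ε), the SILMARILS signature components satisfy the verification identity V = (w₀·V₁ − w₁·V₀)/(w₀ − w₁) = 0. -/
/-! Both verification values are Shamir shares of the secret `0`: after `σ₁σ₂ = d(K' - r)`
and `ε⁻¹εᵢ = 1 + ε⁻¹a_ε wᵢ`, one finds `Vᵢ = c·wᵢ` with `c = d(rε⁻¹a_ε - a_K)`, independently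
of `K'` and `b`. Lagrange interpolation at `0` therefore reconstructs `V = 0`. -/

section

variable {F : Type*} [Field F]

theorem lagrange_interpolate_zero_of_shares {w₀ w₁ : F} (hw : w₀ ≠ w₁) (s c : F) :
    (w₀ * (s + c * w₁) - w₁ * (s + c * w₀)) / (w₀ - w₁) = s := by
  rw [div_eq_iff (sub_ne_zero.2 hw)]
  ring

theorem verification_share_eq {ε : F} (hε : ε ≠ 0) (d K' r aK aε w : F) :
    d * (K' - r) - d * (K' + aK * w) + r * (d * ε⁻¹ * (ε + aε * w)) =
      d * (r * ε⁻¹ * aε - aK) * w := by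
  field_simp
  ring

end

theorem silmarils_verification_identity_general
    (p : ℕ) [Fact p.Prime] (w₀ w₁ : ZMod p) (hw : w₀ ≠ w₁)
    (K' r aK aε b d ε : ZMod p) (hb : b ≠ 0) (hε : ε ≠ 0)
    (K₀' K₁' ε₀ ε₁ : ZMod p)
    (hK₀' : K₀' = K' + aK * w₀) (hK₁' : K₁' = K' + aK * w₁)
    (hε₀ : ε₀ = ε + aε * w₀) (hε₁ : ε₁ = ε + aε * w₁)
    (σ₁ σ₂ σ₃ σ₄ σ₅ : ZMod p)
    (hσ₁ : σ₁ = b * (K' - r)) (hσ₂ : σ₂ = d * b⁻¹)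
    (hσ₃ : σ₃ = K₁' * d) (hσ₄ : σ₄ = d * ε⁻¹ * ε₁)
    (hσ₅ : σ₅ = d * (K₀' - r * ε⁻¹ * ε₀))
    (V₀ V₁ V : ZMod p)
    (hV₀ : V₀ = σ₁ * σ₂ - σ₅) (hV₁ : V₁ = σ₁ * σ₂ - σ₃ + r * σ₄)
    (hV : V = (w₀ * V₁ - w₁ * V₀) / (w₀ - w₁)) :
    V = 0 := by
  have hσ₁σ₂ : σ₁ * σ₂ = d * (K' - r) := by
    rw [hσ₁, hσ₂, mul_mul_mul_inv_cancel hb]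
  set c := d * (r * ε⁻¹ * aε - aK)
  have hV₀c : V₀ = 0 + c * w₀ := by
    rw [hV₀, hσ₁σ₂, hσ₅, hK₀', hε₀]
    linear_combination verification_share_eq hε d K' r aK aε w₀
  have hV₁c : V₁ = 0 + c * w₁ := by
    rw [hV₁, hσ₁σ₂, hσ₃, hσ₄, hK₁', hε₁]
    linear_combination verification_share_eq hε d K' r aK aε w₁
  rw [hV, hV₀c, hV₁c, lagrange_interpolate_zero_of_shares hw]

/-- **Verification identity / correctness and DV simulatability.**
For every choice of parameters `K', r, a_K, a_ε ∈ 𝔽_p` and nonzero `b, d, ε`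
(covering both honest signatures and signatures simulated by the designated
verifier), the SILMARILS signature components satisfy
`V = (w₀·V₁ − w₁·V₀)/(w₀ − w₁) = 0`. -/
theorem silmarils_verification_identity
    (p : ℕ) [Fact p.Prime] (w₀ w₁ : ZMod p) (hw : w₀ ≠ w₁)
    (K' r aK aε b d ε : ZMod p) (hb : b ≠ 0) (hd : d ≠ 0) (hε : ε ≠ 0)
    (K₀' K₁' ε₀ ε₁ : ZMod p)
    (hK₀' : K₀' = K' + aK * w₀) (hK₁' : K₁' = K' + aK * w₁)
    (hε₀ : ε₀ = ε + aε * w₀) (hε₁ : ε₁ = ε + aε * w₁)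
    (σ₁ σ₂ σ₃ σ₄ σ₅ : ZMod p)
    (hσ₁ : σ₁ = b * (K' - r)) (hσ₂ : σ₂ = d * b⁻¹)
    (hσ₃ : σ₃ = K₁' * d) (hσ₄ : σ₄ = d * ε⁻¹ * ε₁)
    (hσ₅ : σ₅ = d * (K₀' - r * ε⁻¹ * ε₀))
    (V₀ V₁ V : ZMod p)
    (hV₀ : V₀ = σ₁ * σ₂ - σ₅) (hV₁ : V₁ = σ₁ * σ₂ - σ₃ + r * σ₄)
    (hV : V = (w₀ * V₁ - w₁ * V₀) / (w₀ - w₁)) :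
    V = 0 :=
  silmarils_verification_identity_general p w₀ w₁ hw K' r aK aε b d ε hb hε K₀' K₁' ε₀ ε₁ hK₀' hK₁'
    hε₀ hε₁ σ₁ σ₂ σ₃ σ₄ σ₅ hσ₁ hσ₂ hσ₃ hσ₄ hσ₅ V₀ V₁ V hV₀ hV₁ hV
end

section
/- Under the SILMARILS signature equations with b ≠ 0, d ≠ 0, ε ≠ 0, verification accepts the honestly generated signature (σ₁,…,σ₅) if and only if ε + a_ε·w₁ ≠ 0; equivalently, the only way an honest signature can be rejected is the event σ₄ = 0, which happens exactly when ε₁ = 0. -/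
/-!
Both verification values are shares of a line through the origin: in `Vᵢ = σ₁σ₂ - d·Kᵢ' + r·d·ε⁻¹·εᵢ`
the honest signature gives `σ₁σ₂ = d(K' - r)`, so the constant terms `d(K' - r) - d·K' + r·d` cancel
and `Vᵢ = c·wᵢ`. Reconstructing the value at `0` therefore always yields `V = 0`, and acceptance
reduces to `σ₄ = d·ε⁻¹·ε₁ ≠ 0`, i.e. to `ε₁ ≠ 0`.
-/

section
variable {F : Type*} [Field F]

lemma lagrange_at_zero_of_shares_of_zero (w₀ w₁ c : F) :
    (w₀ * (c * w₁) - w₁ * (c * w₀)) / (w₀ - w₁) = 0 := by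
  rw [show w₀ * (c * w₁) - w₁ * (c * w₀) = 0 by ring, zero_div]

lemma honest_verification_share_eq {b ε : F} (hb : b ≠ 0) (hε : ε ≠ 0) (K' r aK aε d w : F) :
    b * (K' - r) * (d * b⁻¹) - d * (K' + aK * w - r * ε⁻¹ * (ε + aε * w)) =
      d * (r * ε⁻¹ * aε - aK) * w := by
  field_simp
  ring

lemma mul_inv_mul_eq_zero_iff {d ε : F} (hd : d ≠ 0) (hε : ε ≠ 0) (x : F) :
    d * ε⁻¹ * x = 0 ↔ x = 0 := by
  simp [hd, hε]

end

theorem silmarils_honest_accept_iff_general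
    (p : ℕ) [Fact p.Prime] (w₀ w₁ : ZMod p)
    (K' r aK aε b d ε : ZMod p) (hb : b ≠ 0) (hd : d ≠ 0) (hε : ε ≠ 0)
    (K₀' K₁' ε₀ ε₁ : ZMod p)
    (hK₀' : K₀' = K' + aK * w₀) (hK₁' : K₁' = K' + aK * w₁)
    (hε₀ : ε₀ = ε + aε * w₀) (hε₁ : ε₁ = ε + aε * w₁)
    (σ₁ σ₂ σ₃ σ₄ σ₅ : ZMod p)
    (hσ₁ : σ₁ = b * (K' - r)) (hσ₂ : σ₂ = d * b⁻¹)
    (hσ₃ : σ₃ = K₁' * d) (hσ₄ : σ₄ = d * ε⁻¹ * ε₁)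
    (hσ₅ : σ₅ = d * (K₀' - r * ε⁻¹ * ε₀))
    (V₀ V₁ V : ZMod p)
    (hV₀ : V₀ = σ₁ * σ₂ - σ₅) (hV₁ : V₁ = σ₁ * σ₂ - σ₃ + r * σ₄)
    (hV : V = (w₀ * V₁ - w₁ * V₀) / (w₀ - w₁)) :
    ((σ₄ ≠ 0 ∧ V = 0) ↔ ε + aε * w₁ ≠ 0) ∧ (σ₄ = 0 ↔ ε₁ = 0) := by
  have hσ₄_iff : σ₄ = 0 ↔ ε₁ = 0 := hσ₄ ▸ mul_inv_mul_eq_zero_iff hd hε ε₁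
  set c := d * (r * ε⁻¹ * aε - aK)
  have hV₀_eq : V₀ = c * w₀ := by
    rw [hV₀, hσ₁, hσ₂, hσ₅, hK₀', hε₀]
    exact honest_verification_share_eq hb hε K' r aK aε d w₀
  have hV₁_eq : V₁ = c * w₁ := by
    rw [hV₁, hσ₁, hσ₂, hσ₃, hσ₄, hK₁', hε₁,
      ← honest_verification_share_eq hb hε K' r aK aε d w₁]
    ring
  have hV_zero : V = 0 := by
    rw [hV, hV₀_eq, hV₁_eq]
    exact lagrange_at_zero_of_shares_of_zero w₀ w₁ c
  rw [← hε₁, hV_zero]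
  exact ⟨and_iff_left rfl |>.trans hσ₄_iff.not, hσ₄_iff⟩

/-- **Acceptance of honest signatures characterized.**
Under the SILMARILS signature equations with `b ≠ 0`, `d ≠ 0`, `ε ≠ 0`,
verification accepts the honestly generated signature iff `ε + a_ε·w₁ ≠ 0`;
equivalently, the only way an honest signature is rejected is the event
`σ₄ = 0`, occurring exactly when `ε₁ = 0`. -/
theorem silmarils_honest_accept_iff
    (p : ℕ) [Fact p.Prime] (w₀ w₁ : ZMod p) (hw : w₀ ≠ w₁)
    (K' r aK aε b d ε : ZMod p) (hb : b ≠ 0) (hd : d ≠ 0) (hε : ε ≠ 0)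
    (K₀' K₁' ε₀ ε₁ : ZMod p)
    (hK₀' : K₀' = K' + aK * w₀) (hK₁' : K₁' = K' + aK * w₁)
    (hε₀ : ε₀ = ε + aε * w₀) (hε₁ : ε₁ = ε + aε * w₁)
    (σ₁ σ₂ σ₃ σ₄ σ₅ : ZMod p)
    (hσ₁ : σ₁ = b * (K' - r)) (hσ₂ : σ₂ = d * b⁻¹)
    (hσ₃ : σ₃ = K₁' * d) (hσ₄ : σ₄ = d * ε⁻¹ * ε₁)
    (hσ₅ : σ₅ = d * (K₀' - r * ε⁻¹ * ε₀))
    (V₀ V₁ V : ZMod p)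
    (hV₀ : V₀ = σ₁ * σ₂ - σ₅) (hV₁ : V₁ = σ₁ * σ₂ - σ₃ + r * σ₄)
    (hV : V = (w₀ * V₁ - w₁ * V₀) / (w₀ - w₁)) :
    ((σ₄ ≠ 0 ∧ V = 0) ↔ ε + aε * w₁ ≠ 0) ∧ (σ₄ = 0 ↔ ε₁ = 0) :=
  silmarils_honest_accept_iff_general p w₀ w₁ K' r aK aε b d ε hb hd hε K₀' K₁' ε₀ ε₁ hK₀' hK₁' hε₀
    hε₁ σ₁ σ₂ σ₃ σ₄ σ₅ hσ₁ hσ₂ hσ₃ hσ₄ hσ₅ V₀ V₁ V hV₀ hV₁ hV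
end

section
/- (1/p-Correctness.) Fix a prime p, distinct weights w₀ ≠ w₁ in 𝔽_p with w₁ ≠ 0, and any K', r, a_K ∈ 𝔽_p and b, d, ε ∈ 𝔽_p with b ≠ 0, d ≠ 0, ε ≠ 0. If the slope a_ε is drawn uniformly at random from 𝔽_p and the SILMARILS signature is formed from these values, then the probability that verification rejects the honestly generated signature equals 1/p; in particular it is at most 1/p. -/
open scoped ENNReal

/-! Both verification values are shares of the secret `0`: with `c = d (r ε⁻¹ a_ε - a_K)` one has
`V₀ = c w₀` and `V₁ = c w₁`, so the reconstruction `V` vanishes identically. Hence verification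
rejects exactly when `σ₄ = 0`, i.e. when the share `ε₁ = ε + a_ε w₁` vanishes, which happens for
the single slope `a_ε = -ε / w₁`. -/

section Field

variable {F : Type*} [Field F]

theorem silmarils_V₀_eq {b ε : F} (hb : b ≠ 0) (hε : ε ≠ 0) (K' r aK aε d w₀ : F) :
    b * (K' - r) * (d * b⁻¹) - d * ((K' + aK * w₀) - r * ε⁻¹ * (ε + aε * w₀)) =
      d * (r * ε⁻¹ * aε - aK) * w₀ := by
  field_simp
  ring

theorem silmarils_V₁_eq {b ε : F} (hb : b ≠ 0) (hε : ε ≠ 0) (K' r aK aε d w₁ : F) :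
    b * (K' - r) * (d * b⁻¹) - (K' + aK * w₁) * d + r * (d * ε⁻¹ * (ε + aε * w₁)) =
      d * (r * ε⁻¹ * aε - aK) * w₁ := by
  field_simp
  ring

theorem interpolation_at_zero_of_zero_intercept (c w₀ w₁ : F) :
    (w₀ * (c * w₁) - w₁ * (c * w₀)) / (w₀ - w₁) = 0 := by
  ring

theorem add_mul_eq_zero_iff_eq_neg_div {ε w : F} (hw : w ≠ 0) (x : F) :
    ε + x * w = 0 ↔ x = -ε / w := by
  rw [eq_div_iff hw, add_comm, add_eq_zero_iff_eq_neg]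

end Field

theorem silmarils_correctness_error_general
    (p : ℕ) [Fact p.Prime] (w₀ w₁ : ZMod p) (hw₁ : w₁ ≠ 0)
    (K' r aK b d ε : ZMod p) (hb : b ≠ 0) (hd : d ≠ 0) (hε : ε ≠ 0)
    -- signature components as functions of the random slope `a_ε`
    (σ₁ σ₂ σ₃ : ZMod p) (σ₄ σ₅ V₀ V₁ V : ZMod p → ZMod p)
    (hσ₁ : σ₁ = b * (K' - r)) (hσ₂ : σ₂ = d * b⁻¹)
    (hσ₃ : σ₃ = (K' + aK * w₁) * d)
    (hσ₄ : ∀ aε, σ₄ aε = d * ε⁻¹ * (ε + aε * w₁))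
    (hσ₅ : ∀ aε, σ₅ aε = d * ((K' + aK * w₀) - r * ε⁻¹ * (ε + aε * w₀)))
    (hV₀ : ∀ aε, V₀ aε = σ₁ * σ₂ - σ₅ aε)
    (hV₁ : ∀ aε, V₁ aε = σ₁ * σ₂ - σ₃ + r * σ₄ aε)
    (hV : ∀ aε, V aε = (w₀ * V₁ aε - w₁ * V₀ aε) / (w₀ - w₁)) :
    (PMF.uniformOfFintype (ZMod p)).toOuterMeasure
        {aε : ZMod p | ¬ (σ₄ aε ≠ 0 ∧ V aε = 0)} = (p : ℝ≥0∞)⁻¹ := by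
  have hV_zero (aε : ZMod p) : V aε = 0 := by
    rw [hV, hV₀, hV₁, hσ₁, hσ₂, hσ₃, hσ₄, hσ₅, silmarils_V₀_eq hb hε,
      silmarils_V₁_eq hb hε, interpolation_at_zero_of_zero_intercept]
  have hσ₄_eq_zero (aε : ZMod p) : σ₄ aε = 0 ↔ aε = -ε / w₁ := by
    rw [hσ₄, mul_eq_zero, ← add_mul_eq_zero_iff_eq_neg_div hw₁]
    simp [hd, hε]
  have hreject : {aε : ZMod p | ¬ (σ₄ aε ≠ 0 ∧ V aε = 0)} = {-ε / w₁} := by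
    ext aε
    simp [hV_zero, hσ₄_eq_zero]
  rw [hreject, PMF.toOuterMeasure_apply_singleton, PMF.uniformOfFintype_apply, ZMod.card]

/-- **1/p-correctness.**
Fix a prime `p`, distinct weights `w₀ ≠ w₁` with `w₁ ≠ 0`, and any
`K', r, a_K ∈ 𝔽_p`, `b, d, ε ∈ 𝔽_p` with `b ≠ 0`, `d ≠ 0`, `ε ≠ 0`.
If the slope `a_ε` is drawn uniformly from `𝔽_p` and the SILMARILS signature is
formed from these values, then the probability that verification rejects the
honestly generated signature equals `1/p` (in particular it is at most `1/p`). -/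
theorem silmarils_correctness_error
    (p : ℕ) [Fact p.Prime] (w₀ w₁ : ZMod p) (hw : w₀ ≠ w₁) (hw₁ : w₁ ≠ 0)
    (K' r aK b d ε : ZMod p) (hb : b ≠ 0) (hd : d ≠ 0) (hε : ε ≠ 0)
    -- signature components as functions of the random slope `a_ε`
    (σ₁ σ₂ σ₃ : ZMod p) (σ₄ σ₅ V₀ V₁ V : ZMod p → ZMod p)
    (hσ₁ : σ₁ = b * (K' - r)) (hσ₂ : σ₂ = d * b⁻¹)
    (hσ₃ : σ₃ = (K' + aK * w₁) * d)
    (hσ₄ : ∀ aε, σ₄ aε = d * ε⁻¹ * (ε + aε * w₁))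
    (hσ₅ : ∀ aε, σ₅ aε = d * ((K' + aK * w₀) - r * ε⁻¹ * (ε + aε * w₀)))
    (hV₀ : ∀ aε, V₀ aε = σ₁ * σ₂ - σ₅ aε)
    (hV₁ : ∀ aε, V₁ aε = σ₁ * σ₂ - σ₃ + r * σ₄ aε)
    (hV : ∀ aε, V aε = (w₀ * V₁ aε - w₁ * V₀ aε) / (w₀ - w₁)) :
    (PMF.uniformOfFintype (ZMod p)).toOuterMeasure
        {aε : ZMod p | ¬ (σ₄ aε ≠ 0 ∧ V aε = 0)} = (p : ℝ≥0∞)⁻¹ :=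
  silmarils_correctness_error_general p w₀ w₁ hw₁ K' r aK b d ε hb hd hε σ₁ σ₂ σ₃ σ₄ σ₅ V₀ V₁ V hσ₁
    hσ₂ hσ₃ hσ₄ hσ₅ hV₀ hV₁ hV
end
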